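/- arXiv:1808.05550 — 3 statements merged into one kernel-verified Lean document; each statement's English description precedes it below -/
import Mathlib

section
/- Let n ≥ 1 and 1 ≤ k ≤ n. The function A ↦ (trace_k[A])^(1/k) is concave on the convex cone of n×n Hermitian positive semi-definite matrices; that is, for all Hermitian positive semi-definite A, B and τ ∈ [0,1], (trace_k[τA+(1−τ)B])^(1/k) ≥ τ·(trace_k[A])^(1/k) + (1−τ)·(trace_k[B])^(1/k). -/
/-!
Write `E_k` for the `k`-th elementary symmetric function. Diagonalize `C = τ • A + (1 - τ) • B`
by a unitary `U` and let `a`, `b` be the (real) diagonals of `Uᴴ A U` and `Uᴴ B U`, so that the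
eigenvalues of `C` are `τ a + (1 - τ) b`. The `k`-trace is invariant under unitary conjugation,
equals `E_k` of the eigenvalues, and on positive semidefinite matrices is at most `E_k` of the
diagonal (Hadamard's inequality for every principal minor). So it suffices that `E_k ^ (1/k)` is
concave on nonnegative vectors; being homogeneous of degree one, this is superadditivity. On
positive vectors `E_k` is the product of the ratios `E_{j+1} / E_j`, `j < k`, each of which is
superadditive (Marcus–Lopes), and a geometric mean of superadditive functions is superadditive
(Mahler's inequality). Nonnegative vectors are limits of positive ones.
-/

open Matrix MeasureTheory Finset ProbabilityTheory
open scoped Classical ComplexOrder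

noncomputable section

/-- `kTraceC k A` is the `k`-trace of `A`: the sum of all `k × k` principal minors of `A`,
equivalently the `k`-th elementary symmetric polynomial of the eigenvalues of `A`. -/
def kTraceC {n : ℕ} (k : ℕ) (A : Matrix (Fin n) (Fin n) ℂ) : ℂ :=
  ∑ s ∈ (Finset.univ : Finset (Fin n)).powersetCard k,
    (A.submatrix (fun i : {x // x ∈ s} => (i : Fin n)) (fun j : {x // x ∈ s} => (j : Fin n))).det

/-- The real value of the `k`-trace (which is real for Hermitian matrices). -/
def kTrace {n : ℕ} (k : ℕ) (A : Matrix (Fin n) (Fin n) ℂ) : ℝ := (kTraceC k A).re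

end

namespace Finset

variable {ι : Type*}

-- This is `(s.val.map x).esymm k` (`Finset.esymm_map_val`), in a form suited to induction on `s`.
def esymm {R : Type*} [CommSemiring R] (s : Finset ι) (k : ℕ) (x : ι → R) : R :=
  ∑ t ∈ s.powersetCard k, ∏ i ∈ t, x i

section Algebra

variable {R : Type*} [CommSemiring R] (s : Finset ι) (x : ι → R)

@[simp]
lemma esymm_zero : s.esymm 0 x = 1 := by
  simp [esymm]

@[simp]
lemma esymm_one : s.esymm 1 x = ∑ i ∈ s, x i := by
  simp [esymm, powersetCard_one]

lemma esymm_smul (k : ℕ) (c : R) : s.esymm k (c • x) = c ^ k * s.esymm k x := by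
  rw [esymm, esymm, mul_sum]
  refine sum_congr rfl fun t ht => ?_
  simp_rw [Pi.smul_apply, smul_eq_mul]
  rw [prod_mul_distrib, prod_const, (mem_powersetCard.1 ht).2]

lemma esymm_map {S : Type*} [CommSemiring S] (f : R →+* S) (k : ℕ) :
    s.esymm k (fun i => f (x i)) = f (s.esymm k x) := by
  simp [esymm, map_sum, map_prod]

variable [DecidableEq ι]

lemma esymm_insert {i : ι} (hi : i ∉ s) (k : ℕ) :
    (insert i s).esymm (k + 1) x = s.esymm (k + 1) x + x i * s.esymm k x := by
  have hiT : ∀ t ∈ s.powersetCard k, i ∉ t := fun t ht h => hi ((mem_powersetCard.1 ht).1 h)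
  rw [esymm, powersetCard_succ_insert hi, sum_union, sum_image, esymm, esymm, mul_sum]
  · exact congrArg _ (sum_congr rfl fun t ht => prod_insert (hiT t ht))
  · intro t ht t' ht' h
    simpa [erase_insert (hiT t ht), erase_insert (hiT t' ht')] using congrArg (erase · i) h
  · refine disjoint_left.2 fun t ht ht' => ?_
    obtain ⟨t', ht', rfl⟩ := mem_image.1 ht'
    exact hi ((mem_powersetCard.1 ht).1 (mem_insert_self i t'))

lemma esymm_succ_of_mem {i : ι} (hi : i ∈ s) (k : ℕ) :
    s.esymm (k + 1) x = (s.erase i).esymm (k + 1) x + x i * (s.erase i).esymm k x := by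
  conv_lhs => rw [← insert_erase hi]
  exact esymm_insert _ x (notMem_erase i s) k

-- Each `(k+1)`-subset `t` is counted once for each of its elements `i`, as `insert i (t.erase i)`.
lemma succ_mul_esymm (k : ℕ) :
    ((k : R) + 1) * s.esymm (k + 1) x = ∑ i ∈ s, x i * (s.erase i).esymm k x := by
  have hcount : ∀ t ∈ s.powersetCard (k + 1),
      ((k : R) + 1) * ∏ j ∈ t, x j = ∑ i ∈ t, x i * ∏ j ∈ t.erase i, x j := by
    intro t ht
    rw [sum_congr rfl fun i hi => mul_prod_erase t x hi, sum_const, (mem_powersetCard.1 ht).2]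
    simp [nsmul_eq_mul]
  simp_rw [esymm, mul_sum, sum_congr rfl hcount]
  rw [sum_sigma', sum_sigma']
  refine sum_nbij' (fun p => ⟨p.2, p.1.erase p.2⟩) (fun q => ⟨insert q.1 q.2, q.1⟩)
    ?_ ?_ ?_ ?_ fun _ _ => rfl
  · rintro ⟨t, i⟩ h
    simp only [mem_sigma, mem_powersetCard] at h ⊢
    obtain ⟨⟨hts, htk⟩, hi⟩ := h
    exact ⟨hts hi, erase_subset_erase i hts, by rw [card_erase_of_mem hi, htk]; rfl⟩
  · rintro ⟨i, t⟩ h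
    simp only [mem_sigma, mem_powersetCard] at h ⊢
    obtain ⟨hi, hts, htk⟩ := h
    have hit : i ∉ t := fun h => notMem_erase i s (hts h)
    exact ⟨⟨insert_subset hi (hts.trans (erase_subset i s)),
      by rw [card_insert_of_notMem hit, htk]⟩, mem_insert_self i t⟩
  · rintro ⟨t, i⟩ h
    simp only [mem_sigma] at h
    simp [insert_erase h.2]
  · rintro ⟨i, t⟩ h
    simp only [mem_sigma, mem_powersetCard] at h
    simp [erase_insert fun hit => notMem_erase i s (h.2.1 hit)]

end Algebra

section Order

variable {R : Type*} [CommSemiring R] [PartialOrder R] {s : Finset ι} {x y : ι → R}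

lemma esymm_nonneg [IsOrderedRing R] (hx : 0 ≤ x) (k : ℕ) : 0 ≤ s.esymm k x :=
  sum_nonneg fun _ _ => prod_nonneg fun i _ => hx i

lemma esymm_mono [IsOrderedRing R] (hx : 0 ≤ x) (hxy : x ≤ y) (k : ℕ) :
    s.esymm k x ≤ s.esymm k y :=
  sum_le_sum fun _ _ => prod_le_prod (fun i _ => hx i) fun i _ => hxy i

lemma esymm_pos [IsStrictOrderedRing R] (hx : ∀ i, 0 < x i) {k : ℕ} (hk : k ≤ #s) :
    0 < s.esymm k x :=
  sum_pos (fun _ _ => prod_pos fun i _ => hx i) (powersetCard_nonempty.2 hk)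

end Order

lemma continuous_esymm {R : Type*} [CommSemiring R] [TopologicalSpace R] [IsTopologicalSemiring R]
    (s : Finset ι) (k : ℕ) : Continuous fun x : ι → R => s.esymm k x := by
  unfold esymm
  fun_prop

end Finset

section ParallelSum

variable {K : Type*} [Field K] [LinearOrder K] [IsStrictOrderedRing K] {a b c d : K}

def parallelSum (a b : K) : K := a * b / (a + b)

lemma parallelSum_le_parallelSum_right (ha : 0 < a) (hb : 0 < b) (hbc : b ≤ c) :
    parallelSum a b ≤ parallelSum a c := by
  unfold parallelSum
  rw [div_le_div_iff₀ (by positivity) (by linarith)]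
  nlinarith [mul_pos ha ha]

-- Lehman's inequality: after clearing denominators it reads `0 ≤ (a d - b c)²`.
lemma parallelSum_add_le (ha : 0 < a) (hb : 0 < b) (hc : 0 < c) (hd : 0 < d) :
    parallelSum a b + parallelSum c d ≤ parallelSum (a + c) (b + d) := by
  unfold parallelSum
  rw [div_add_div _ _ (by positivity) (by positivity),
    div_le_div_iff₀ (by positivity) (by positivity)]
  nlinarith [sq_nonneg (a * d - b * c)]

end ParallelSum

namespace Finset

variable {ι K : Type*} [Field K] [LinearOrder K] [IsStrictOrderedRing K] {s : Finset ι}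
  {x y : ι → K}

lemma esymm_eq_prod_range_div (hx : ∀ i, 0 < x i) {k : ℕ} (hks : k ≤ #s) :
    s.esymm k x = ∏ j ∈ range k, s.esymm (j + 1) x / s.esymm j x := by
  induction k with
  | zero => simp
  | succ k ih =>
    rw [prod_range_succ, ← ih (by omega), mul_div_cancel₀ _ (esymm_pos hx (by omega)).ne']

variable [DecidableEq ι]

lemma mul_esymm_erase_eq_parallelSum_mul (hx : ∀ i, 0 < x i) {k : ℕ} (hks : k + 2 ≤ #s)
    {i : ι} (hi : i ∈ s) :
    x i * (s.erase i).esymm (k + 1) x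
      = parallelSum (x i) ((s.erase i).esymm (k + 1) x / (s.erase i).esymm k x)
        * s.esymm (k + 1) x := by
  have hcard : k + 1 ≤ #(s.erase i) := by rw [card_erase_of_mem hi]; omega
  have hE₀ := esymm_pos hx (Nat.le_of_succ_le hcard)
  have hE₁ := esymm_pos hx hcard
  have hxi := hx i
  rw [esymm_succ_of_mem s x hi, parallelSum]
  field_simp
  ring

lemma add_two_mul_esymm_div_eq_sum_parallelSum (hx : ∀ i, 0 < x i) {k : ℕ}
    (hks : k + 2 ≤ #s) :
    ((k : K) + 2) * (s.esymm (k + 2) x / s.esymm (k + 1) x)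
      = ∑ i ∈ s, parallelSum (x i) ((s.erase i).esymm (k + 1) x / (s.erase i).esymm k x) := by
  rw [← mul_div_assoc, div_eq_iff (esymm_pos hx (by omega)).ne', sum_mul,
    ← sum_congr rfl fun i hi => mul_esymm_erase_eq_parallelSum_mul hx hks hi, ← succ_mul_esymm]
  push_cast
  ring

-- Marcus–Lopes: Lehman's inequality termwise in `add_two_mul_esymm_div_eq_sum_parallelSum`.
theorem esymm_succ_div_esymm_add_le (hx : ∀ i, 0 < x i) (hy : ∀ i, 0 < y i) {k : ℕ}
    (hks : k + 1 ≤ #s) :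
    s.esymm (k + 1) x / s.esymm k x + s.esymm (k + 1) y / s.esymm k y
      ≤ s.esymm (k + 1) (x + y) / s.esymm k (x + y) := by
  have hxy : ∀ i, 0 < (x + y) i := fun i => add_pos (hx i) (hy i)
  induction k generalizing s with
  | zero => simp [sum_add_distrib]
  | succ k ih =>
    rw [← mul_le_mul_iff_right₀ (by positivity : (0 : K) < (k : K) + 2), mul_add,
      add_two_mul_esymm_div_eq_sum_parallelSum hx hks,
      add_two_mul_esymm_div_eq_sum_parallelSum hy hks,
      add_two_mul_esymm_div_eq_sum_parallelSum hxy hks, ← sum_add_distrib]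
    refine sum_le_sum fun i hi => ?_
    have hcard : k + 1 ≤ #(s.erase i) := by rw [card_erase_of_mem hi]; omega
    have ratio_pos : ∀ {z : ι → K}, (∀ i, 0 < z i) →
        0 < (s.erase i).esymm (k + 1) z / (s.erase i).esymm k z :=
      fun hz => div_pos (esymm_pos hz hcard) (esymm_pos hz (by omega))
    calc _ ≤ parallelSum (x i + y i) ((s.erase i).esymm (k + 1) x / (s.erase i).esymm k x
              + (s.erase i).esymm (k + 1) y / (s.erase i).esymm k y) :=
          parallelSum_add_le (hx i) (ratio_pos hx) (hy i) (ratio_pos hy)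
      _ ≤ _ := parallelSum_le_parallelSum_right (hxy i)
          (add_pos (ratio_pos hx) (ratio_pos hy)) (ih hcard)

end Finset

namespace Real

open Finset in
-- Mahler's inequality: AM-GM for the fractions `a i / (a i + b i)` and for `b i / (a i + b i)`,
-- whose weighted means add up to `1`.
theorem geom_mean_weighted_add_le {ι : Type*} (s : Finset ι) {w a b : ι → ℝ}
    (hw : ∀ i ∈ s, 0 ≤ w i) (hw' : ∑ i ∈ s, w i = 1) (ha : ∀ i ∈ s, 0 < a i)
    (hb : ∀ i ∈ s, 0 < b i) :
    ∏ i ∈ s, a i ^ w i + ∏ i ∈ s, b i ^ w i ≤ ∏ i ∈ s, (a i + b i) ^ w i := by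
  have hab : ∀ i ∈ s, 0 < a i + b i := fun i hi => add_pos (ha i hi) (hb i hi)
  have amgm : ∀ c : ι → ℝ, (∀ i ∈ s, 0 < c i) →
      (∏ i ∈ s, c i ^ w i) / ∏ i ∈ s, (a i + b i) ^ w i
        ≤ ∑ i ∈ s, w i * (c i / (a i + b i)) := by
    intro c hc
    rw [← prod_div_distrib]
    refine le_of_eq_of_le
      (prod_congr rfl fun i hi => (div_rpow (hc i hi).le (hab i hi).le _).symm) ?_
    exact geom_mean_le_arith_mean_weighted s w _ hw hw' fun i hi =>
      (div_pos (hc i hi) (hab i hi)).le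
  have hsum : ∑ i ∈ s, w i * (a i / (a i + b i)) + ∑ i ∈ s, w i * (b i / (a i + b i)) = 1 := by
    rw [← sum_add_distrib, ← hw']
    refine sum_congr rfl fun i hi => ?_
    rw [← mul_add, ← add_div, div_self (hab i hi).ne', mul_one]
  rw [← div_le_one (prod_pos fun i hi => rpow_pos_of_pos (hab i hi) _), add_div]
  linarith [amgm a ha, amgm b hb]

end Real

namespace Finset

variable {ι : Type*} [DecidableEq ι] {s : Finset ι} {k : ℕ}

theorem esymm_rpow_add_le_of_pos (hk : 1 ≤ k) (hks : k ≤ #s) {x y : ι → ℝ}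
    (hx : ∀ i, 0 < x i) (hy : ∀ i, 0 < y i) :
    s.esymm k x ^ (1 / k : ℝ) + s.esymm k y ^ (1 / k : ℝ) ≤ s.esymm k (x + y) ^ (1 / k : ℝ) := by
  have hxy : ∀ i, 0 < (x + y) i := fun i => add_pos (hx i) (hy i)
  have ratio_pos : ∀ {z : ι → ℝ}, (∀ i, 0 < z i) → ∀ j ∈ range k,
      0 < s.esymm (j + 1) z / s.esymm j z := fun hz j hj =>
    div_pos (esymm_pos hz ((mem_range.1 hj).trans_le hks))
      (esymm_pos hz ((mem_range.1 hj).le.trans hks))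
  have as_geom_mean : ∀ {z : ι → ℝ}, (∀ i, 0 < z i) → s.esymm k z ^ (1 / k : ℝ)
      = ∏ j ∈ range k, (s.esymm (j + 1) z / s.esymm j z) ^ (1 / k : ℝ) := fun hz => by
    rw [esymm_eq_prod_range_div hz hks,
      Real.finsetProd_rpow _ _ fun j hj => (ratio_pos hz j hj).le]
  rw [as_geom_mean hx, as_geom_mean hy, as_geom_mean hxy]
  refine (Real.geom_mean_weighted_add_le _ (fun _ _ => by positivity) ?_ (ratio_pos hx)
    (ratio_pos hy)).trans (prod_le_prod (fun j hj => Real.rpow_nonneg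
      (add_pos (ratio_pos hx j hj) (ratio_pos hy j hj)).le _) fun j hj => ?_)
  · simp [field]
  · exact Real.rpow_le_rpow (add_pos (ratio_pos hx j hj) (ratio_pos hy j hj)).le
      (esymm_succ_div_esymm_add_le hx hy ((mem_range.1 hj).trans_le hks)) (by positivity)

theorem esymm_rpow_add_le (hk : 1 ≤ k) (hks : k ≤ #s) {x y : ι → ℝ} (hx : 0 ≤ x)
    (hy : 0 ≤ y) :
    s.esymm k x ^ (1 / k : ℝ) + s.esymm k y ^ (1 / k : ℝ) ≤ s.esymm k (x + y) ^ (1 / k : ℝ) := by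
  have hk' : (0 : ℝ) ≤ 1 / k := by positivity
  let shift : ℝ → ι → ℝ := Function.const ι
  let f : ℝ → ℝ := fun ε => s.esymm k (x + shift ε + (y + shift ε)) ^ (1 / k : ℝ)
  have hf : Continuous f :=
    ((continuous_esymm s k).comp (by fun_prop)).rpow_const fun _ => Or.inr hk'
  have le_shift : ∀ {z : ι → ℝ}, 0 ≤ z → ∀ ε > 0,
      s.esymm k z ^ (1 / k : ℝ) ≤ s.esymm k (z + shift ε) ^ (1 / k : ℝ) := fun hz ε hε =>
    Real.rpow_le_rpow (esymm_nonneg hz k)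
      (esymm_mono hz (le_add_of_nonneg_right fun _ => hε.le) k) hk'
  have shift_pos : ∀ {z : ι → ℝ}, 0 ≤ z → ∀ ε > 0, ∀ i, 0 < (z + shift ε) i :=
    fun hz ε hε i => add_pos_of_nonneg_of_pos (hz i) hε
  have le_f : ∀ ε > 0, s.esymm k x ^ (1 / k : ℝ) + s.esymm k y ^ (1 / k : ℝ) ≤ f ε :=
    fun ε hε => (add_le_add (le_shift hx ε hε) (le_shift hy ε hε)).trans
      (esymm_rpow_add_le_of_pos hk hks (shift_pos hx ε hε) (shift_pos hy ε hε))
  have hf0 : f 0 = s.esymm k (x + y) ^ (1 / k : ℝ) := by simp [f, shift, Function.const_zero]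
  rw [← hf0]
  exact ge_of_tendsto (hf.continuousWithinAt (s := Set.Ioi 0) (x := 0)).tendsto
    (eventually_nhdsWithin_of_forall le_f)

theorem concaveOn_esymm_rpow (hk : 1 ≤ k) (hks : k ≤ #s) :
    ConcaveOn ℝ (Set.Ici 0) fun x : ι → ℝ => s.esymm k x ^ (1 / k : ℝ) := by
  refine ⟨convex_Ici 0, fun x hx y hy a b ha hb _ => ?_⟩
  have homogeneous : ∀ {c : ℝ} {z : ι → ℝ}, 0 ≤ c → 0 ≤ z →
      s.esymm k (c • z) ^ (1 / k : ℝ) = c • s.esymm k z ^ (1 / k : ℝ) := fun hc hz => by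
    rw [esymm_smul, Real.mul_rpow (by positivity) (esymm_nonneg hz k), one_div,
      Real.pow_rpow_inv_natCast hc (by omega), smul_eq_mul]
  rw [← homogeneous ha hx, ← homogeneous hb hy]
  exact esymm_rpow_add_le hk hks (smul_nonneg ha hx) (smul_nonneg hb hy)

end Finset

namespace Matrix

variable {𝕜 m : Type*} [RCLike 𝕜] [Fintype m] [DecidableEq m]

lemma PosSemidef.det_le_one_of_diag_eq_one {Q : Matrix m m 𝕜} (hQ : Q.PosSemidef)
    (hdiag : ∀ i, Q i i = 1) : Q.det ≤ 1 := by
  set μ := hQ.isHermitian.eigenvalues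
  have hsum : ∑ i, (μ i - 1) = 0 := by
    have htrace := hQ.isHermitian.trace_eq_sum_eigenvalues
    simp only [trace, diag, hdiag, sum_const, card_univ, nsmul_eq_mul, mul_one] at htrace
    rw [sum_sub_distrib, sum_const, card_univ, nsmul_eq_mul, mul_one, sub_eq_zero]
    exact_mod_cast htrace.symm
  rw [hQ.isHermitian.det_eq_prod_eigenvalues, ← RCLike.ofReal_prod, ← RCLike.ofReal_one,
    RCLike.ofReal_le_ofReal]
  -- `t ≤ exp (t - 1)`, and the exponents add up to `trace Q - card m = 0`.
  calc ∏ i, μ i ≤ ∏ i, Real.exp (μ i - 1) :=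
        prod_le_prod (fun i _ => hQ.eigenvalues_nonneg i)
          fun i _ => by linarith [Real.add_one_le_exp (μ i - 1)]
    _ = 1 := by rw [← Real.exp_sum, hsum, Real.exp_zero]

theorem PosSemidef.det_le_prod_diag {P : Matrix m m 𝕜} (hP : P.PosSemidef) :
    P.det ≤ ∏ i, P i i := by
  by_cases hzero : ∃ i, P i i = 0
  · obtain ⟨i, hi⟩ := hzero
    have hcol : P *ᵥ Pi.single i 1 = 0 :=
      (hP.dotProduct_mulVec_zero_iff _).1 (by simp [mulVec_single, hi])
    rw [prod_eq_zero (f := fun j => P j j) (mem_univ i) hi,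
      det_eq_zero_of_column_eq_zero i fun j => by simpa [mulVec_single] using congrFun hcol j]
  push Not at hzero
  have hre : ∀ i, ((RCLike.re (P i i) : ℝ) : 𝕜) = P i i := fun i =>
    RCLike.conj_eq_iff_re.1 (hP.isHermitian.apply i i)
  have hpos : ∀ i, 0 < RCLike.re (P i i) := fun i =>
    (RCLike.re_nonneg_of_nonneg (hP.isHermitian.apply i i)).2 hP.diag_nonneg |>.lt_of_ne
      fun h => hzero i (by rw [← hre i, ← h, RCLike.ofReal_zero])
  -- Rescale `P` to unit diagonal.
  let c : m → ℝ := fun i => (√(RCLike.re (P i i)))⁻¹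
  let D : Matrix m m 𝕜 := diagonal fun i => (c i : 𝕜)
  have hscale : ∀ i, (c i : 𝕜) * P i i * c i = 1 := fun i => by
    rw [← hre i]
    norm_cast
    rw [mul_right_comm, ← mul_inv, Real.mul_self_sqrt (hpos i).le, inv_mul_cancel₀ (hpos i).ne']
  have hD : Dᴴ = D := by simp [D, diagonal_conjTranspose]
  have hQ : (D * P * D).PosSemidef := by simpa only [hD] using hP.conjTranspose_mul_mul_same D
  have hQdiag : ∀ i, (D * P * D) i i = 1 := fun i => by
    simp [D, mul_diagonal, diagonal_mul, hscale]
  have hdet : (∏ i, P i i) * (D * P * D).det = P.det := by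
    rw [det_mul, det_mul, det_diagonal]
    calc _ = (∏ i, (c i : 𝕜) * P i i * c i) * P.det := by
          simp only [prod_mul_distrib]; ring
      _ = P.det := by simp [hscale]
  rw [← hdet]
  exact mul_le_of_le_one_right (prod_nonneg fun i _ => hP.diag_nonneg)
    (hQ.det_le_one_of_diag_eq_one hQdiag)

lemma IsHermitian.star_eigenvectorUnitary_mul_mul {A : Matrix m m 𝕜} (hA : A.IsHermitian) :
    star (hA.eigenvectorUnitary : Matrix m m 𝕜) * A * hA.eigenvectorUnitary
      = diagonal fun i => (hA.eigenvalues i : 𝕜) := by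
  have := hA.conjStarAlgAut_star_eigenvectorUnitary
  rwa [Unitary.conjStarAlgAut_star_apply] at this

end Matrix

section KTrace

variable {n : ℕ} (k : ℕ)

lemma kTraceC_eq_coeff_det_one_add_X_smul (A : Matrix (Fin n) (Fin n) ℂ) :
    kTraceC k A = (det (1 + (Polynomial.X : Polynomial ℂ) • A.map Polynomial.C)).coeff k :=
  (coeff_det_one_add_X_smul_eq_sum_minors A k).symm

lemma kTraceC_mul_comm (A B : Matrix (Fin n) (Fin n) ℂ) :
    kTraceC k (A * B) = kTraceC k (B * A) := by
  rw [kTraceC_eq_coeff_det_one_add_X_smul, kTraceC_eq_coeff_det_one_add_X_smul, Matrix.map_mul,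
    ← Matrix.smul_mul, det_one_add_mul_comm, Matrix.mul_smul, Matrix.map_mul]

lemma kTrace_conj {U V : Matrix (Fin n) (Fin n) ℂ} (hVU : V * U = 1)
    (A : Matrix (Fin n) (Fin n) ℂ) : kTrace k (U * A * V) = kTrace k A := by
  rw [kTrace, kTraceC_mul_comm, ← Matrix.mul_assoc, hVU, Matrix.one_mul, kTrace]

lemma kTrace_diagonal_ofReal (d : Fin n → ℝ) :
    kTrace k (diagonal fun i => (d i : ℂ)) = univ.esymm k d := by
  have hminor : ∀ s : Finset (Fin n),
      ((diagonal fun i => (d i : ℂ)).submatrix (Subtype.val : s → Fin n) Subtype.val).det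
        = ∏ i ∈ s, (d i : ℂ) := fun s => by
    rw [submatrix_diagonal _ _ Subtype.val_injective, det_diagonal]
    exact prod_coe_sort s fun i => (d i : ℂ)
  rw [kTrace, kTraceC, sum_congr rfl fun s _ => hminor s]
  exact (congrArg Complex.re (univ.esymm_map d Complex.ofRealHom k)).trans (Complex.ofReal_re _)

lemma kTrace_eq_esymm_eigenvalues {A : Matrix (Fin n) (Fin n) ℂ} (hA : A.IsHermitian) :
    kTrace k A = univ.esymm k hA.eigenvalues := by
  rw [← kTrace_conj k (Matrix.mem_unitaryGroup_iff.1 hA.eigenvectorUnitary.2) A,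
    hA.star_eigenvectorUnitary_mul_mul]
  exact kTrace_diagonal_ofReal k hA.eigenvalues

lemma kTrace_nonneg {M : Matrix (Fin n) (Fin n) ℂ} (hM : M.PosSemidef) : 0 ≤ kTrace k M :=
  (Complex.nonneg_iff.1 (sum_nonneg fun _ _ => (hM.submatrix _).det_nonneg)).1

lemma kTrace_le_esymm_re_diag {M : Matrix (Fin n) (Fin n) ℂ} (hM : M.PosSemidef) :
    kTrace k M ≤ univ.esymm k fun i => (M i i).re := by
  have hdiag : M.diag = fun i => Complex.ofRealHom (M i i).re := funext fun i =>
    (Complex.conj_eq_iff_re.1 (hM.isHermitian.apply i i)).symm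
  have hle : kTraceC k M ≤ univ.esymm k M.diag :=
    sum_le_sum fun s _ => (hM.submatrix _).det_le_prod_diag.trans_eq (prod_coe_sort s M.diag)
  rw [hdiag, univ.esymm_map] at hle
  exact (Complex.le_def.1 hle).1

lemma kTrace_le_esymm_re_diag_conj {M U : Matrix (Fin n) (Fin n) ℂ} (hM : M.PosSemidef)
    (hU : U * star U = 1) : kTrace k M ≤ univ.esymm k fun i => ((star U * M * U) i i).re := by
  rw [← kTrace_conj k hU M]
  exact kTrace_le_esymm_re_diag k (hM.conjTranspose_mul_mul_same U)

end KTrace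

theorem kTrace_rpow_concave_general {n : ℕ} (k : ℕ) (hk1 : 1 ≤ k) (hkn : k ≤ n)
    (A B : Matrix (Fin n) (Fin n) ℂ) (hA : A.PosSemidef) (hB : B.PosSemidef)
    (τ : ℝ) (hτ0 : 0 ≤ τ) (hτ1 : τ ≤ 1) :
    τ * (kTrace k A) ^ (1 / (k : ℝ)) + (1 - τ) * (kTrace k B) ^ (1 / (k : ℝ))
      ≤ (kTrace k ((τ : ℂ) • A + ((1 - τ : ℝ) : ℂ) • B)) ^ (1 / (k : ℝ)) := by
  have hτ1' : 0 ≤ 1 - τ := sub_nonneg.2 hτ1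
  set C := (τ : ℂ) • A + ((1 - τ : ℝ) : ℂ) • B
  have hC : C.PosSemidef :=
    (hA.smul (Complex.zero_le_real.2 hτ0)).add (hB.smul (Complex.zero_le_real.2 hτ1'))
  let U : Matrix (Fin n) (Fin n) ℂ := hC.isHermitian.eigenvectorUnitary
  have hU : U * star U = 1 := Matrix.mem_unitaryGroup_iff.1 hC.isHermitian.eigenvectorUnitary.2
  have hCU : star U * C * U = diagonal fun i => (hC.isHermitian.eigenvalues i : ℂ) :=
    hC.isHermitian.star_eigenvectorUnitary_mul_mul
  let diagRe : Matrix (Fin n) (Fin n) ℂ → Fin n → ℝ := fun M i => ((star U * M * U) i i).re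
  have heig : hC.isHermitian.eigenvalues = τ • diagRe A + (1 - τ) • diagRe B := funext fun i => by
    simpa [C, diagRe, Matrix.mul_add, Matrix.add_mul] using
      (congrArg Complex.re (congrFun₂ hCU i i)).symm
  have bound : ∀ {M}, M.PosSemidef →
      kTrace k M ^ (1 / (k : ℝ)) ≤ univ.esymm k (diagRe M) ^ (1 / (k : ℝ)) := fun hM =>
    Real.rpow_le_rpow (kTrace_nonneg k hM) (kTrace_le_esymm_re_diag_conj k hM hU) (by positivity)
  have diagRe_nonneg : ∀ {M}, M.PosSemidef → 0 ≤ diagRe M := fun hM i =>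
    (Complex.nonneg_iff.1 (hM.conjTranspose_mul_mul_same U).diag_nonneg).1
  calc τ * kTrace k A ^ (1 / (k : ℝ)) + (1 - τ) * kTrace k B ^ (1 / (k : ℝ))
      ≤ τ • univ.esymm k (diagRe A) ^ (1 / (k : ℝ))
          + (1 - τ) • univ.esymm k (diagRe B) ^ (1 / (k : ℝ)) :=
        add_le_add (mul_le_mul_of_nonneg_left (bound hA) hτ0)
          (mul_le_mul_of_nonneg_left (bound hB) hτ1')
    _ ≤ univ.esymm k (τ • diagRe A + (1 - τ) • diagRe B) ^ (1 / (k : ℝ)) :=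
        (concaveOn_esymm_rpow hk1 (by simpa using hkn)).2 (diagRe_nonneg hA) (diagRe_nonneg hB)
          hτ0 hτ1' (by ring)
    _ = kTrace k C ^ (1 / (k : ℝ)) := by rw [← heig, kTrace_eq_esymm_eigenvalues]

/-- The map `A ↦ (trace_k[A])^(1/k)` is concave on Hermitian positive semi-definite
matrices. -/
theorem kTrace_rpow_concave {n : ℕ} (hn : 1 ≤ n) (k : ℕ) (hk1 : 1 ≤ k) (hkn : k ≤ n)
    (A B : Matrix (Fin n) (Fin n) ℂ) (hA : A.PosSemidef) (hB : B.PosSemidef)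
    (τ : ℝ) (hτ0 : 0 ≤ τ) (hτ1 : τ ≤ 1) :
    τ * (kTrace k A) ^ (1 / (k : ℝ)) + (1 - τ) * (kTrace k B) ^ (1 / (k : ℝ))
      ≤ (kTrace k ((τ : ℂ) • A + ((1 - τ : ℝ) : ℂ) • B)) ^ (1 / (k : ℝ)) :=
  kTrace_rpow_concave_general k hk1 hkn A B hA hB τ hτ0 hτ1
end

section
/- Let n ≥ 1 and 1 ≤ k ≤ n. For any n×n complex matrix A, the mixed discriminant of k copies of A and n−k copies of the identity matrix I_n satisfies D(A,…,A [k copies], I_n,…,I_n [n−k copies]) = trace_k[A] / C(n,k), where C(n,k) is the binomial coefficient. -/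
open Matrix MeasureTheory Finset ProbabilityTheory
open scoped Classical ComplexOrder

noncomputable section

/-- The mixed discriminant of `n` matrices `A 0, …, A (n-1)`:
`D(A₁,…,Aₙ) = (1/n!) Σ_{σ ∈ Sₙ} det M^σ`, where the `j`-th column of `M^σ`
is the `j`-th column of `A (σ j)`. -/
def mixedDisc {n : ℕ} (A : Fin n → Matrix (Fin n) (Fin n) ℂ) : ℂ :=
  (n.factorial : ℂ)⁻¹ * ∑ σ : Equiv.Perm (Fin n), (Matrix.of fun i j => A (σ j) i j).det

/-- The real value of the mixed discriminant (real for Hermitian arguments). -/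
def mixedDiscR {n : ℕ} (A : Fin n → Matrix (Fin n) (Fin n) ℂ) : ℝ := (mixedDisc A).re

end

/-!
Column `j` of `M^σ` is column `j` of `A` when `σ j < k` and of `1` otherwise, so `det M^σ` is the
principal minor of `A` on `σ⁻¹ • {0, …, k - 1}`. As `σ` runs over `Sₙ`, this set runs over the
`k`-subsets of `Fin n`, and since `Sₙ` acts transitively on them it hits each one equally often,
namely `n! / C(n, k)` times.
-/

open scoped Pointwise

section PretransitiveSum

variable {G X M : Type*} [Group G] [Fintype G] [MulAction G X] [MulAction.IsPretransitive G X]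
  [AddCommMonoid M]

theorem sum_smul_eq_sum_smul_of_isPretransitive (φ : X → M) (x y : X) :
    ∑ g : G, φ (g • x) = ∑ g : G, φ (g • y) := by
  obtain ⟨h, rfl⟩ := MulAction.exists_smul_eq G x y
  simp_rw [smul_smul]
  exact (Equiv.sum_comp (Equiv.mulRight h) fun g => φ (g • x)).symm

theorem card_nsmul_sum_smul_of_isPretransitive [Fintype X] (φ : X → M) (x : X) :
    Fintype.card X • ∑ g : G, φ (g • x) = Fintype.card G • ∑ y, φ y :=
  calc Fintype.card X • ∑ g : G, φ (g • x)
      = ∑ y : X, ∑ g : G, φ (g • y) := by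
        rw [← Finset.card_univ, ← Finset.sum_const]
        exact Finset.sum_congr rfl fun y _ => sum_smul_eq_sum_smul_of_isPretransitive φ x y
    _ = ∑ g : G, ∑ y : X, φ (g • y) := Finset.sum_comm
    _ = ∑ _g : G, ∑ y, φ y := by
        congr with g
        exact Equiv.sum_comp (MulAction.toPerm g) φ
    _ = Fintype.card G • ∑ y, φ y := by rw [Finset.sum_const, Finset.card_univ]

end PretransitiveSum

theorem Equiv.Perm.choose_nsmul_sum_smul_finset {α M : Type*} [Fintype α] [DecidableEq α]
    [AddCommMonoid M] (φ : Finset α → M) (s : Finset α) :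
    (Fintype.card α).choose s.card • ∑ σ : Equiv.Perm α, φ (σ • s)
      = (Fintype.card α).factorial • ∑ t ∈ univ.powersetCard s.card, φ t := by
  have := Set.powersetCard.isPretransitive (α := α) (n := s.card)
  have hcard : Fintype.card (Set.powersetCard α s.card) = (Fintype.card α).choose s.card := by
    rw [Fintype.card_eq_nat_card, Set.powersetCard.card, Nat.card_eq_fintype_card]
  have hsum : ∑ t : Set.powersetCard α s.card, φ t = ∑ t ∈ univ.powersetCard s.card, φ t :=
    (Finset.sum_subtype _ (fun t => by simp [Set.powersetCard]) _).symm
  simpa [hcard, hsum, Fintype.card_perm] using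
    card_nsmul_sum_smul_of_isPretransitive (G := Equiv.Perm α)
      (fun t : Set.powersetCard α s.card => φ t) ⟨s, rfl⟩

namespace Matrix

variable {ι R : Type*} [Fintype ι] [DecidableEq ι] [CommRing R]

def principalMinor (A : Matrix ι ι R) (s : Finset ι) : R :=
  (A.submatrix ((↑) : s → ι) (↑)).det

theorem det_of_ite_mem_one (A : Matrix ι ι R) (s : Finset ι) :
    (of fun i j => (if j ∈ s then A else 1) i j).det = A.principalMinor s := by
  rw [← det_transpose, principalMinor, ← det_transpose (A.submatrix _ _), transpose_submatrix,
    ← det_piecewise_one_eq_submatrix_det]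
  congr 1
  ext j i
  by_cases hj : j ∈ s <;> simp [hj, Finset.piecewise, one_apply, eq_comm]

end Matrix

theorem kTraceC_eq_sum_principalMinor {n : ℕ} (k : ℕ) (A : Matrix (Fin n) (Fin n) ℂ) :
    kTraceC k A = ∑ s ∈ univ.powersetCard k, A.principalMinor s :=
  rfl

theorem mixedDisc_self_identity_general {n : ℕ} (k : ℕ) (hkn : k ≤ n)
    (A : Matrix (Fin n) (Fin n) ℂ) :
    mixedDisc (fun i => if (i : ℕ) < k then A else 1) = kTraceC k A / (n.choose k : ℂ) := by
  let T : Finset (Fin n) := {i | (i : ℕ) < k}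
  have hT : T.card = k := by simp [T, Fin.card_filter_val_lt, hkn]
  have hcol (σ : Equiv.Perm (Fin n)) :
      (of fun i j => (if ((σ j : Fin n) : ℕ) < k then A else 1) i j).det
        = A.principalMinor (σ⁻¹ • T) := by
    rw [← det_of_ite_mem_one]
    simp [T, Finset.mem_inv_smul_finset_iff, Equiv.Perm.smul_def]
  have hcount : (n.choose k : ℂ) * ∑ σ : Equiv.Perm (Fin n), A.principalMinor (σ⁻¹ • T)
      = n.factorial * kTraceC k A := by
    rw [← Finset.sum_inv_index univ fun σ : Equiv.Perm (Fin n) => A.principalMinor (σ • T),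
      Finset.inv_univ]
    simpa [hT, nsmul_eq_mul, kTraceC_eq_sum_principalMinor] using
      Equiv.Perm.choose_nsmul_sum_smul_finset (fun s => A.principalMinor s) T
  have hchoose : (n.choose k : ℂ) ≠ 0 := by exact_mod_cast (Nat.choose_pos hkn).ne'
  rw [mixedDisc, eq_div_iff hchoose]
  simp only [hcol]
  rw [mul_right_comm, mul_assoc, hcount]
  simp [Nat.factorial_ne_zero]

/-- The mixed discriminant of `k` copies of `A` and `n - k` copies of the identity equals
`trace_k[A] / C(n,k)`. -/
theorem mixedDisc_self_identity {n : ℕ} (hn : 1 ≤ n) (k : ℕ) (hk1 : 1 ≤ k) (hkn : k ≤ n)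
    (A : Matrix (Fin n) (Fin n) ℂ) :
    mixedDisc (fun i => if (i : ℕ) < k then A else 1) = kTraceC k A / (n.choose k : ℂ) :=
  mixedDisc_self_identity_general k hkn A
end

section
/- Let n ≥ 1, s > 0, and let f : (0,+∞)^n → (0,+∞) be homogeneous of order s, i.e., f(λx) = λ^s f(x) for all λ > 0 and x ∈ (0,+∞)^n. Then x ↦ f(x)^(1/s) is concave on (0,+∞)^n if and only if x ↦ ln f(x) is concave on (0,+∞)^n. -/
/-!
On a cone, a positive function `g` that is homogeneous of degree one is concave as soon as it is
quasiconcave: writing `c = a g(x) + b g(y)`, the point `c⁻¹ (a x + b y)` is a convex combination of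
the normalised points `x / g(x)` and `y / g(y)`, on which `g` equals `1`, so `g(a x + b y) ≥ c`.
Log-concavity gives quasiconcavity, and concavity gives log-concavity because `log` is concave and
monotone. Applied to `g = f ^ (1/s)`, whose logarithm is `s⁻¹ log f`, this is the theorem.
-/

section

variable {E : Type*} [AddCommGroup E] [Module ℝ E] {S : Set E} {g : E → ℝ}

theorem concaveOn_congr {f : E → ℝ} (hfg : Set.EqOn f g S) :
    ConcaveOn ℝ S f ↔ ConcaveOn ℝ S g :=
  ⟨fun h => h.congr hfg, fun h => h.congr hfg.symm⟩

theorem concaveOn_smul_iff {c : ℝ} (hc : 0 < c) : ConcaveOn ℝ S (c • g) ↔ ConcaveOn ℝ S g :=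
  ⟨fun h => by simpa [inv_mul_cancel_left₀ hc.ne'] using h.smul (inv_nonneg.2 hc.le),
    fun h => h.smul hc.le⟩

theorem ConcaveOn.log (hg : ConcaveOn ℝ S g) (hpos : ∀ x ∈ S, 0 < g x) :
    ConcaveOn ℝ S (fun x => Real.log (g x)) := by
  refine ⟨hg.1, fun x hx y hy a b ha hb hab => ?_⟩
  have hcombo_pos : 0 < a • g x + b • g y := convex_Ioi (0 : ℝ) (hpos x hx) (hpos y hy) ha hb hab
  calc a • Real.log (g x) + b • Real.log (g y) ≤ Real.log (a • g x + b • g y) :=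
        strictConcaveOn_log_Ioi.concaveOn.2 (hpos x hx) (hpos y hy) ha hb hab
    _ ≤ Real.log (g (a • x + b • y)) := Real.log_le_log hcombo_pos (hg.2 hx hy ha hb hab)

theorem ConcaveOn.quasiconcaveOn_of_log (hpos : ∀ x ∈ S, 0 < g x)
    (hg : ConcaveOn ℝ S (fun x => Real.log (g x))) : QuasiconcaveOn ℝ S g := by
  intro r
  convert hg.quasiconcaveOn.monotone_comp Real.exp_monotone r using 1
  ext x
  simp only [Set.mem_ofPred_eq, Function.comp_apply]
  exact and_congr_right fun hx => by rw [Real.exp_log (hpos x hx)]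

theorem QuasiconcaveOn.concaveOn_of_homogeneous (hS : ∀ t : ℝ, 0 < t → ∀ x ∈ S, t • x ∈ S)
    (hpos : ∀ x ∈ S, 0 < g x) (hhom : ∀ t : ℝ, 0 < t → ∀ x ∈ S, g (t • x) = t * g x)
    (hg : QuasiconcaveOn ℝ S g) : ConcaveOn ℝ S g := by
  obtain ⟨hconv, hmin⟩ := quasiconcaveOn_iff_min_le.1 hg
  refine ⟨hconv, fun x hx y hy a b ha hb hab => ?_⟩
  have hA := hpos x hx
  have hB := hpos y hy
  set A := g x
  set B := g y
  set c := a * A + b * B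
  have hc : 0 < c := convex_Ioi (0 : ℝ) hA hB ha hb hab
  have hnormalize : ∀ z ∈ S, g ((g z)⁻¹ • z) = 1 := fun z hz => by
    rw [hhom _ (inv_pos.2 (hpos z hz)) z hz, inv_mul_cancel₀ (hpos z hz).ne']
  have hcombo : (a * A / c) • (A⁻¹ • x) + (b * B / c) • (B⁻¹ • y) = c⁻¹ • (a • x + b • y) := by
    simp only [smul_smul, smul_add]
    congr 2 <;> field_simp
  have hweights : a * A / c + b * B / c = 1 := by rw [← add_div, div_self hc.ne']
  have hone : 1 ≤ g (c⁻¹ • (a • x + b • y)) := by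
    have := hmin (hS _ (inv_pos.2 hA) x hx) (hS _ (inv_pos.2 hB) y hy)
      (by positivity) (by positivity) hweights
    rwa [hnormalize x hx, hnormalize y hy, min_self, hcombo] at this
  rw [hhom _ (inv_pos.2 hc) _ (hconv hx hy ha hb hab), one_le_inv_mul₀ hc] at hone
  simpa only [smul_eq_mul] using hone

theorem concaveOn_iff_concaveOn_log_of_homogeneous (hS : ∀ t : ℝ, 0 < t → ∀ x ∈ S, t • x ∈ S)
    (hpos : ∀ x ∈ S, 0 < g x) (hhom : ∀ t : ℝ, 0 < t → ∀ x ∈ S, g (t • x) = t * g x) :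
    ConcaveOn ℝ S g ↔ ConcaveOn ℝ S (fun x => Real.log (g x)) :=
  ⟨fun h => h.log hpos,
    fun h => (h.quasiconcaveOn_of_log hpos).concaveOn_of_homogeneous hS hpos hhom⟩

end

theorem homogeneous_rpow_concave_iff_log_concave_general {n : ℕ} (s : ℝ) (hs : 0 < s)
    (f : (Fin n → ℝ) → ℝ)
    (hpos : ∀ x : Fin n → ℝ, (∀ i, 0 < x i) → 0 < f x)
    (hhom : ∀ lam : ℝ, 0 < lam → ∀ x : Fin n → ℝ, (∀ i, 0 < x i) →
      f (lam • x) = lam ^ s * f x) :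
    ConcaveOn ℝ {x : Fin n → ℝ | ∀ i, 0 < x i} (fun x => f x ^ (1 / s)) ↔
      ConcaveOn ℝ {x : Fin n → ℝ | ∀ i, 0 < x i} (fun x => Real.log (f x)) := by
  set S : Set (Fin n → ℝ) := {x | ∀ i, 0 < x i}
  have hcone : ∀ t : ℝ, 0 < t → ∀ x ∈ S, t • x ∈ S := fun t ht x hx i => mul_pos ht (hx i)
  have hroot_hom : ∀ t : ℝ, 0 < t → ∀ x : Fin n → ℝ, (∀ i, 0 < x i) →
      f (t • x) ^ (1 / s) = t * f x ^ (1 / s) := fun t ht x hx => by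
    rw [hhom t ht x hx, Real.mul_rpow (by positivity) (hpos x hx).le, ← Real.rpow_mul ht.le,
      mul_one_div_cancel hs.ne', Real.rpow_one]
  have hlog : Set.EqOn (fun x => Real.log (f x)) (s • fun x => Real.log (f x ^ (1 / s))) S := by
    intro x hx
    simp only [Pi.smul_apply, smul_eq_mul, Real.log_rpow (hpos x hx)]
    field_simp
  rw [concaveOn_congr hlog, concaveOn_smul_iff hs]
  exact concaveOn_iff_concaveOn_log_of_homogeneous hcone
    (fun x hx => Real.rpow_pos_of_pos (hpos x hx) _) hroot_hom

/-- For a positive function `f` on the positive orthant that is homogeneous of order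
`s > 0`, `x ↦ f(x)^(1/s)` is concave if and only if `x ↦ ln f(x)` is concave. -/
theorem homogeneous_rpow_concave_iff_log_concave {n : ℕ} (hn : 1 ≤ n) (s : ℝ) (hs : 0 < s)
    (f : (Fin n → ℝ) → ℝ)
    (hpos : ∀ x : Fin n → ℝ, (∀ i, 0 < x i) → 0 < f x)
    (hhom : ∀ lam : ℝ, 0 < lam → ∀ x : Fin n → ℝ, (∀ i, 0 < x i) →
      f (lam • x) = lam ^ s * f x) :
    ConcaveOn ℝ {x : Fin n → ℝ | ∀ i, 0 < x i} (fun x => f x ^ (1 / s)) ↔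
      ConcaveOn ℝ {x : Fin n → ℝ | ∀ i, 0 < x i} (fun x => Real.log (f x)) :=
  homogeneous_rpow_concave_iff_log_concave_general s hs f hpos hhom
end
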